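/- For every integer t ≥ 2, if the real number O_t/O_{t-1} is strictly greater than (1+√5)/2, then O_{t+1}/O_t is strictly less than (1+√5)/2. -/

import Mathlib

/-- The Macaulay bound `a^⟨t⟩`: writing the (unique, greedy) binomial expansion
`a = C(k(t),t) + C(k(t-1),t-1) + ⋯ + C(k(j),j)` with `k(t) > ⋯ > k(j) ≥ j ≥ 1`,
`macaulay t a = C(k(t)+1,t+1) + C(k(t-1)+1,t) + ⋯ + C(k(j)+1,j+1)`.
(The value at `t = 0` is irrelevant for the definitions below.) -/
def macaulay : ℕ → ℕ → ℕ
  | 0, a => a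
  | t+1, a =>
    if a = 0 then 0
    else
      Nat.choose (Nat.findGreatest (fun m => Nat.choose m (t+1) ≤ a) (a + t + 1) + 1) (t+2)
        + macaulay t (a - Nat.choose
            (Nat.findGreatest (fun m => Nat.choose m (t+1) ≤ a) (a + t + 1)) (t+1))

/-- A finite O-sequence `(a_0, a_1, …, a_s)`, encoded as a nonempty list of
positive integers with `a_0 = 1` and `a_{t+1} ≤ a_t^⟨t⟩` for all `1 ≤ t ≤ s-1`. -/
def IsOSeq (l : List ℕ) : Prop :=
  l ≠ [] ∧ (∀ x ∈ l, 0 < x) ∧ l.getD 0 0 = 1 ∧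
    ∀ t : ℕ, 1 ≤ t → t + 1 < l.length → l.getD (t+1) 0 ≤ macaulay t (l.getD t 0)

/-- `numOSeq d` = the number `O_d` of finite O-sequences of multiplicity `d`. -/
noncomputable def numOSeq (d : ℕ) : ℕ := {l : List ℕ | IsOSeq l ∧ l.sum = d}.ncard

/-- `numASeq d` = the number `A_d` of finite O-sequences of multiplicity `d`
whose last entry is strictly greater than `1`. -/
noncomputable def numASeq (d : ℕ) : ℕ :=
  {l : List ℕ | IsOSeq l ∧ l.sum = d ∧ 1 < l.getLastD 0}.ncard

/-- `numOCond p n k d` = the number `O(p,n,k,d)` of finite O-sequences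
`(a_0,…,a_s)` of multiplicity `d` with `s ≤ n`, `a_i = C(p-1+i, i)` for all
`0 ≤ i ≤ k` (in particular `s ≥ k`), and `a_i < C(p-1+i, i)` for `k < i ≤ s`. -/
noncomputable def numOCond (p n k d : ℕ) : ℕ :=
  {l : List ℕ | IsOSeq l ∧ l.sum = d ∧ l.length - 1 ≤ n ∧ k ≤ l.length - 1 ∧
    (∀ i ≤ k, l.getD i 0 = Nat.choose (p - 1 + i) i) ∧
    (∀ i : ℕ, k < i → i < l.length → l.getD i 0 < Nat.choose (p - 1 + i) i)}.ncard

lemma macaulay_zero (t : ℕ) : macaulay t 0 = 0 := by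
  cases t <;> simp [macaulay]

lemma macaulay_one (t : ℕ) : macaulay t 1 = 1 := by
  cases t with
  | zero => simp [macaulay]
  | succ t =>
    have hK : Nat.findGreatest (fun m => Nat.choose m (t+1) ≤ 1) (1 + t + 1) = t + 1 := by
      rw [Nat.findGreatest_eq_iff]
      refine ⟨by omega, fun _ => by simp, ?_⟩
      intro n hn hn' hP
      have hn2 : n = t + 2 := by omega
      subst hn2
      rw [Nat.choose_succ_self_right] at hP
      omega
    show (if (1:ℕ) = 0 then 0 else _) = 1
    rw [if_neg (by norm_num), hK]
    simp [macaulay_zero]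

lemma macaulay_pos (t a : ℕ) (ha : 1 ≤ a) : 1 ≤ macaulay t a := by
  cases t with
  | zero => simpa [macaulay] using ha
  | succ t =>
    have hK : t + 1 ≤ Nat.findGreatest (fun m => Nat.choose m (t+1) ≤ a) (a + t + 1) :=
      Nat.le_findGreatest (by omega) (by simpa using ha)
    show 1 ≤ (if a = 0 then 0 else _)
    rw [if_neg (by omega)]
    have hc : 0 < Nat.choose
        (Nat.findGreatest (fun m => Nat.choose m (t+1) ≤ a) (a + t + 1) + 1) (t+2) :=
      Nat.choose_pos (by omega)
    omega

lemma exists_concat {l : List ℕ} (h : l ≠ []) : ∃ m a, l = m ++ [a] := by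
  rcases List.eq_nil_or_concat l with h' | ⟨m, a, h'⟩
  · exact absurd h' h
  · exact ⟨m, a, by simpa [List.concat_eq_append] using h'⟩

lemma isOSeq_concat_elim {m : List ℕ} {a : ℕ} (h : IsOSeq (m ++ [a])) (hm : m ≠ []) :
    IsOSeq m := by
  obtain ⟨-, hpos, hhead, hrec⟩ := h
  have h0 : 0 < m.length := List.length_pos_iff.mpr hm
  refine ⟨hm, fun x hx => hpos x (by simp [hx]), ?_, ?_⟩
  · rw [List.getD_append m [a] 0 0 h0] at hhead
    exact hhead
  · intro t ht hlt
    have := hrec t ht (by simp; omega)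
    rwa [List.getD_append m [a] 0 t (by omega), List.getD_append m [a] 0 (t+1) hlt] at this

lemma isOSeq_append_one {m : List ℕ} (h : IsOSeq m) : IsOSeq (m ++ [1]) := by
  obtain ⟨hne, hpos, hhead, hrec⟩ := h
  have h0 : 0 < m.length := List.length_pos_iff.mpr hne
  refine ⟨by simp, ?_, ?_, ?_⟩
  · intro x hx
    rcases List.mem_append.mp hx with hx | hx
    · exact hpos x hx
    · simp at hx; omega
  · rw [List.getD_append m [1] 0 0 h0]; exact hhead
  · intro t ht hlt
    rw [List.length_append, List.length_singleton] at hlt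
    have hle : t + 1 ≤ m.length := by omega
    rcases lt_or_eq_of_le hle with hlt' | heq
    · rw [List.getD_append m [1] 0 t (by omega), List.getD_append m [1] 0 (t+1) hlt']
      exact hrec t ht hlt'
    · have hmem : m.getD t 0 ∈ m := by
        rw [List.getD_eq_getElem m 0 (show t < m.length by omega)]
        exact List.getElem_mem _
      have h1 : ([1] : List ℕ).getD (t+1 - m.length) 0 = 1 := by
        rw [show t + 1 - m.length = 0 by omega]; rfl
      rw [List.getD_append m [1] 0 t (by omega),
          List.getD_append_right m [1] 0 (t+1) (by omega), h1]
      exact macaulay_pos t _ (hpos _ hmem)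

lemma isOSeq_append_replicate {m : List ℕ} (h : IsOSeq m) (k : ℕ) :
    IsOSeq (m ++ List.replicate k 1) := by
  induction k with
  | zero => simpa using h
  | succ k ih =>
    rw [List.replicate_succ' (n := k) (a := 1), ← List.append_assoc]
    exact isOSeq_append_one ih

lemma finite_oseq_sets {d : ℕ} {S : Set (List ℕ)}
    (hS : ∀ l ∈ S, (∀ x ∈ l, 0 < x) ∧ l.sum = d) : S.Finite := by
  have hsub : S ⊆ (fun c : Composition d => c.blocks) '' Set.univ := by
    intro l hl
    exact ⟨⟨l, fun hi => (hS l hl).1 _ hi, (hS l hl).2⟩, trivial, rfl⟩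
  exact (Set.finite_univ.image _).subset hsub

lemma isOSeq_replicate_one (d : ℕ) (hd : 1 ≤ d) : IsOSeq (List.replicate d 1) := by
  have hone : IsOSeq [1] := by
    refine ⟨by simp, by simp, rfl, ?_⟩
    intro t ht hlt
    simp at hlt
  have h := isOSeq_append_replicate hone (d - 1)
  have he : List.replicate d 1 = [1] ++ List.replicate (d-1) 1 := by
    cases d with
    | zero => omega
    | succ n => simp [List.replicate_succ]
  rw [he]
  exact h

lemma one_le_numOSeq (d : ℕ) (hd : 1 ≤ d) : 1 ≤ numOSeq d := by
  have hfin : {l : List ℕ | IsOSeq l ∧ l.sum = d}.Finite :=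
    finite_oseq_sets (fun l hl => ⟨hl.1.2.1, hl.2⟩)
  have hne : {l : List ℕ | IsOSeq l ∧ l.sum = d}.Nonempty :=
    ⟨List.replicate d 1, isOSeq_replicate_one d hd, by simp⟩
  exact (Set.ncard_pos hfin).mpr hne

lemma oseq_concat_no_longer {m1 m2 : List ℕ} {a1 k1 k2 : ℕ}
    (h1 : IsOSeq (m1 ++ [a1])) (ha1 : 2 ≤ a1) (hm2 : m2 ≠ [])
    (heq : m1 ++ List.replicate k1 1 = m2 ++ List.replicate k2 1) :
    m1.length ≤ m2.length := by
  by_contra hlen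
  push_neg at hlen
  have hm2pos : 0 < m2.length := List.length_pos_iff.mpr hm2
  have hlensum : m1.length + k1 = m2.length + k2 := by
    have := congrArg List.length heq
    simpa using this
  have htake := congrArg (List.take m1.length) heq
  rw [List.take_left, List.take_append,
      List.take_of_length_le (le_of_lt hlen), List.take_replicate] at htake
  rw [show (m1.length - m2.length) ⊓ k2 = m1.length - m2.length by
        omega] at htake
  -- htake : m1 = m2 ++ List.replicate (m1.length - m2.length) 1
  have e1 : m1.getD (m1.length - 1) 0 = 1 := by
    have hgd : (m2 ++ List.replicate (m1.length - m2.length) 1).getD (m1.length - 1) 0 = 1 := by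
      rw [List.getD_append_right _ _ _ _ (by omega)]
      rw [List.getD_eq_getElem _ _ (by rw [List.length_replicate]; omega)]
      simp
    rw [← htake] at hgd
    exact hgd
  have e0 : (m1 ++ [a1]).getD (m1.length - 1) 0 = 1 := by
    rw [List.getD_append _ _ _ _ (by omega)]; exact e1
  have e2 : (m1 ++ [a1]).getD m1.length 0 = a1 := by
    rw [List.getD_append_right _ _ _ _ (le_refl _)]
    simp
  have hcon := h1.2.2.2 (m1.length - 1) (by omega) (by simp; omega)
  rw [show m1.length - 1 + 1 = m1.length by omega] at hcon
  rw [e0, e2, macaulay_one] at hcon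
  omega

lemma numOSeq_fib {d : ℕ} (hd : 2 ≤ d) : numOSeq (d+1) ≤ numOSeq d + numOSeq (d-1) := by
  classical
  have hfin : ∀ n : ℕ, {l : List ℕ | IsOSeq l ∧ l.sum = n}.Finite :=
    fun n => finite_oseq_sets (fun l hl => ⟨hl.1.2.1, hl.2⟩)
  set B : Set (List ℕ) := {l | (IsOSeq l ∧ l.sum = d+1) ∧ l.getLastD 0 = 1} with hBdef
  set A : Set (List ℕ) := {l | (IsOSeq l ∧ l.sum = d+1) ∧ 2 ≤ l.getLastD 0} with hAdef
  have hBsub : B ⊆ {l : List ℕ | IsOSeq l ∧ l.sum = d+1} := fun l hl => hl.1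
  have hAsub : A ⊆ {l : List ℕ | IsOSeq l ∧ l.sum = d+1} := fun l hl => hl.1
  have hsub : {l : List ℕ | IsOSeq l ∧ l.sum = d+1} ⊆ B ∪ A := by
    intro l hl
    obtain ⟨m, a, rfl⟩ := exists_concat hl.1.1
    have ha : 0 < a := hl.1.2.1 a (by simp)
    by_cases h1 : a = 1
    · left; exact ⟨hl, by rw [List.getLastD_concat]; exact h1⟩
    · right; exact ⟨hl, by rw [List.getLastD_concat]; omega⟩
  -- B injects into O-sequences of multiplicity d via dropLast
  have hBle : B.ncard ≤ numOSeq d := by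
    apply Set.ncard_le_ncard_of_injOn List.dropLast ?_ ?_ (hfin d)
    · rintro l ⟨⟨hseq, hsum⟩, hlast⟩
      obtain ⟨m, a, rfl⟩ := exists_concat hseq.1
      rw [List.getLastD_concat] at hlast
      subst hlast
      have hm : m ≠ [] := by
        rintro rfl
        simp at hsum
        omega
      rw [List.dropLast_concat]
      refine ⟨isOSeq_concat_elim hseq hm, ?_⟩
      have := hsum
      rw [List.sum_append] at this
      simp at this
      omega
    · rintro l1 ⟨⟨hseq1, hsum1⟩, hlast1⟩ l2 ⟨⟨hseq2, hsum2⟩, hlast2⟩ hfe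
      obtain ⟨m1, a1, rfl⟩ := exists_concat hseq1.1
      obtain ⟨m2, a2, rfl⟩ := exists_concat hseq2.1
      rw [List.getLastD_concat] at hlast1 hlast2
      rw [List.dropLast_concat, List.dropLast_concat] at hfe
      rw [hfe, hlast1, hlast2]
  -- A injects into O-sequences of multiplicity d-1
  have hAle : A.ncard ≤ numOSeq (d-1) := by
    apply Set.ncard_le_ncard_of_injOn
      (fun l => l.dropLast ++ List.replicate (l.getLastD 0 - 2) 1) ?_ ?_ (hfin (d-1))
    · rintro l ⟨⟨hseq, hsum⟩, hlast⟩
      obtain ⟨m, a, rfl⟩ := exists_concat hseq.1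
      rw [List.getLastD_concat] at hlast
      have hm : m ≠ [] := by
        rintro rfl
        have hh := hseq.2.2.1
        simp at hh
        omega
      simp only [List.dropLast_concat, List.getLastD_concat]
      have hsum' : m.sum + a = d + 1 := by
        rw [List.sum_append] at hsum; simpa using hsum
      refine ⟨isOSeq_append_replicate (isOSeq_concat_elim hseq hm) _, ?_⟩
      rw [List.sum_append, List.sum_replicate, smul_eq_mul, mul_one]
      omega
    · rintro l1 ⟨⟨hseq1, hsum1⟩, hlast1⟩ l2 ⟨⟨hseq2, hsum2⟩, hlast2⟩ hfe
      obtain ⟨m1, a1, rfl⟩ := exists_concat hseq1.1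
      obtain ⟨m2, a2, rfl⟩ := exists_concat hseq2.1
      rw [List.getLastD_concat] at hlast1 hlast2
      simp only [List.dropLast_concat, List.getLastD_concat] at hfe
      have hm1 : m1 ≠ [] := by
        rintro rfl
        have hh := hseq1.2.2.1
        simp at hh
        omega
      have hm2 : m2 ≠ [] := by
        rintro rfl
        have hh := hseq2.2.2.1
        simp at hh
        omega
      have hle1 := oseq_concat_no_longer hseq1 hlast1 hm2 hfe
      have hle2 := oseq_concat_no_longer hseq2 hlast2 hm1 hfe.symm
      obtain ⟨hm12, hrep⟩ := List.append_inj hfe (le_antisymm hle1 hle2)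
      have hk : a1 - 2 = a2 - 2 := by
        have := congrArg List.length hrep
        simpa using this
      have ha12 : a1 = a2 := by omega
      rw [hm12, ha12]
  calc numOSeq (d+1) ≤ (B ∪ A).ncard :=
        Set.ncard_le_ncard hsub (((hfin (d+1)).subset hBsub).union ((hfin (d+1)).subset hAsub))
    _ ≤ B.ncard + A.ncard := Set.ncard_union_le B A
    _ ≤ numOSeq d + numOSeq (d-1) := Nat.add_le_add hBle hAle

/-- For every integer `t ≥ 2`, if `O_t/O_{t-1} > (1+√5)/2`, then
`O_{t+1}/O_t < (1+√5)/2`. -/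
theorem Od_ratio_alternates_goldenRatio (t : ℕ) (ht : 2 ≤ t)
    (h : (1 + Real.sqrt 5) / 2 < (numOSeq t : ℝ) / (numOSeq (t - 1) : ℝ)) :
    (numOSeq (t + 1) : ℝ) / (numOSeq t : ℝ) < (1 + Real.sqrt 5) / 2 := by
  set φ : ℝ := (1 + Real.sqrt 5) / 2 with hφdef
  have hs5 : Real.sqrt 5 ^ 2 = 5 := Real.sq_sqrt (by norm_num)
  have hs5pos : 0 < Real.sqrt 5 := Real.sqrt_pos.mpr (by norm_num)
  have hφ1 : 1 < φ := by
    rw [hφdef]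
    nlinarith [hs5, hs5pos]
  have hφsq : φ * φ = φ + 1 := by
    rw [hφdef]
    nlinarith [hs5]
  have hx1 : 1 ≤ numOSeq (t-1) := one_le_numOSeq _ (by omega)
  have hy1 : 1 ≤ numOSeq t := one_le_numOSeq _ (by omega)
  have hz : numOSeq (t+1) ≤ numOSeq t + numOSeq (t-1) := numOSeq_fib ht
  set x : ℝ := (numOSeq (t-1) : ℝ) with hxdef
  set y : ℝ := (numOSeq t : ℝ) with hydef
  set z : ℝ := (numOSeq (t+1) : ℝ) with hzdef
  have hx1' : (1:ℝ) ≤ x := by rw [hxdef]; exact_mod_cast hx1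
  have hy1' : (1:ℝ) ≤ y := by rw [hydef]; exact_mod_cast hy1
  have hxpos : (0:ℝ) < x := by linarith
  have hypos : (0:ℝ) < y := by linarith
  have hzxy : z ≤ y + x := by
    rw [hzdef, hydef, hxdef]
    exact_mod_cast hz
  have hyx : φ * x < y := (lt_div_iff₀ hxpos).mp h
  rw [div_lt_iff₀ hypos]
  have hstep : (φ - 1) * (φ * x) < (φ - 1) * y :=
    mul_lt_mul_of_pos_left hyx (by linarith)
  have e : (φ - 1) * (φ * x) = x := by linear_combination x * hφsq
  nlinarith [hstep, e, hzxy]
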